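/- arXiv:1310.7726 — 4 statements merged into one kernel-verified Lean document; each statement's English description precedes it below -/
import Mathlib

section
/- Fix reals b < c, α₁ > 0, α₂ > 0, γ₁, γ₂ with A := α₂·c + γ₂ < B := α₁·b + γ₁. Define φ : ℝ → ℝ by φ(u) = α₁·u + γ₁ for u ≤ b, φ(u) = (A·(u−b) − B·(u−c))/(c−b) for b < u < c, and φ(u) = α₂·u + γ₂ for u ≥ c; define β₀(V) := b + (V−B)·(c−b)/(A−B) and β₂(V) := (V−γ₂)/α₂. Let g : ℝ → ℝ be C¹ with g' ≥ 0 and set G(u) := ∫₀ᵘ g(φ(s)) ds. Let Q ⊆ ℝ² be open, let v : Q → ℝ be C² with A ≤ v ≤ B on Q, let λ : Q → ℝ be C¹ with ∂ₜλ ≥ 0 on Q, and define u := (1−λ)·(β₀∘v) + λ·(β₂∘v). Assume ∂ₜu(x,t) = ∂²ₓv(x,t) at every (x,t) ∈ Q, and set G*(x,t) := (1−λ(x,t))·G(β₀(v(x,t))) + λ(x,t)·G(β₂(v(x,t))). Then ∂ₜG*(x,t) ≤ g(v(x,t))·∂²ₓv(x,t) for every (x,t) ∈ Q. -/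
/-!
Since `φ ∘ β₀ = id` on `[A, B]` and `φ ∘ β₂ = id` on `[A, ∞)`, the chain rule gives
`∂ₜ G(βᵢ(v)) = g(v) ∂ₜ βᵢ(v)`, and therefore
`∂ₜG* - g(v) ∂ₜu = ∂ₜλ · (G(β₂ v) - G(β₀ v) - g(v) (β₂ v - β₀ v))`.
On `[β₀ v, β₂ v]` the graph of `φ` lies below the level `v`, so `G' = g ∘ φ ≤ g(v)` there by
monotonicity of `g`, and the bracket is nonpositive by the mean value inequality;
`∂ₜλ ≥ 0` concludes, and `∂ₜu = ∂²ₓv` turns `g(v) ∂ₜu` into the right-hand side.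
-/

/-- Partial derivative in the second (time) variable. -/
noncomputable def pderivT (f : ℝ × ℝ → ℝ) (p : ℝ × ℝ) : ℝ :=
  deriv (fun t => f (p.1, t)) p.2

/-- Second partial derivative in the first (space) variable. -/
noncomputable def pderivXX (f : ℝ × ℝ → ℝ) (p : ℝ × ℝ) : ℝ :=
  deriv (deriv (fun x => f (x, p.2))) p.1

open Set

theorem sub_le_mul_sub_of_hasDerivAt_le {G f : ℝ → ℝ} {x y C : ℝ}
    (hG : ∀ s, HasDerivAt G (f s) s) (hf : ∀ s ∈ Icc x y, f s ≤ C) (hxy : x ≤ y) :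
    G y - G x ≤ C * (y - x) := by
  refine (convex_Icc x y).image_sub_le_mul_sub_of_deriv_le
    (fun s _ => (hG s).continuousAt.continuousWithinAt)
    (fun s _ => (hG s).differentiableAt.differentiableWithinAt) (fun s hs => ?_)
    x (left_mem_Icc.2 hxy) y (right_mem_Icc.2 hxy) hxy
  rw [(hG s).deriv]
  exact hf s (interior_subset hs)

theorem deriv_mix_comp_le {G y₀ y₁ l : ℝ → ℝ} {t w : ℝ}
    (hy₀ : DifferentiableAt ℝ y₀ t) (hy₁ : DifferentiableAt ℝ y₁ t) (hl : DifferentiableAt ℝ l t)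
    (hG₀ : HasDerivAt G w (y₀ t)) (hG₁ : HasDerivAt G w (y₁ t)) (hl' : 0 ≤ deriv l t)
    (hchord : G (y₁ t) - G (y₀ t) ≤ w * (y₁ t - y₀ t)) :
    deriv (fun s => (1 - l s) * G (y₀ s) + l s * G (y₁ s)) t
      ≤ w * deriv (fun s => (1 - l s) * y₀ s + l s * y₁ s) t := by
  have hl1 := hl.hasDerivAt.const_sub 1
  have hGmix : HasDerivAt (fun s => (1 - l s) * G (y₀ s) + l s * G (y₁ s))
      (-deriv l t * G (y₀ t) + (1 - l t) * (w * deriv y₀ t)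
        + (deriv l t * G (y₁ t) + l t * (w * deriv y₁ t))) t :=
    (hl1.mul (hG₀.comp t hy₀.hasDerivAt)).add (hl.hasDerivAt.mul (hG₁.comp t hy₁.hasDerivAt))
  have hmix : HasDerivAt (fun s => (1 - l s) * y₀ s + l s * y₁ s)
      (-deriv l t * y₀ t + (1 - l t) * deriv y₀ t + (deriv l t * y₁ t + l t * deriv y₁ t)) t :=
    (hl1.mul hy₀.hasDerivAt).add (hl.hasDerivAt.mul hy₁.hasDerivAt)
  rw [hGmix.deriv, hmix.deriv]
  -- the difference of the two sides is `l' * (G y₁ - G y₀ - w * (y₁ - y₀))`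
  nlinarith

theorem DifferentiableAt.comp_mk_snd {f : ℝ × ℝ → ℝ} {p : ℝ × ℝ} (hf : DifferentiableAt ℝ f p) :
    DifferentiableAt ℝ (fun t => f (p.1, t)) p.2 :=
  hf.comp p.2 (differentiableAt_const _ |>.prodMk differentiableAt_id)

section PiecewiseLinear

variable {b c α₁ α₂ γ₁ γ₂ A B : ℝ} {φ β₀ β₂ : ℝ → ℝ}

theorem phi_eq_of_mem_Icc (hbc : b < c) (hA : A = α₂ * c + γ₂) (hB : B = α₁ * b + γ₁)
    (hφ1 : ∀ u, u ≤ b → φ u = α₁ * u + γ₁)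
    (hφ0 : ∀ u, b < u → u < c → φ u = (A * (u - b) - B * (u - c)) / (c - b))
    (hφ2 : ∀ u, c ≤ u → φ u = α₂ * u + γ₂) :
    ∀ s ∈ Icc b c, φ s = (A * (s - b) - B * (s - c)) / (c - b) := by
  have hcb : c - b ≠ 0 := (sub_pos.2 hbc).ne'
  rintro s ⟨hbs, hsc⟩
  rcases hbs.eq_or_lt with hbs | hbs
  · rw [← hbs, hφ1 b le_rfl, ← hB]; field_simp; ring
  rcases hsc.eq_or_lt with hsc | hsc
  · rw [hsc, hφ2 c le_rfl, ← hA]; field_simp; ring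
  exact hφ0 s hbs hsc

theorem continuous_phi
    (hφ1 : ∀ u, u ≤ b → φ u = α₁ * u + γ₁)
    (hφm : ∀ s ∈ Icc b c, φ s = (A * (s - b) - B * (s - c)) / (c - b))
    (hφ2 : ∀ u, c ≤ u → φ u = α₂ * u + γ₂) :
    Continuous φ := by
  have hleft : ContinuousOn φ (Iic b) :=
    (continuousOn_congr fun s hs => hφ1 s hs).2 (by fun_prop)
  have hmid : ContinuousOn φ (Icc b c) := (continuousOn_congr hφm).2 (by fun_prop)
  have hright : ContinuousOn φ (Ici c) :=
    (continuousOn_congr fun s hs => hφ2 s hs).2 (by fun_prop)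
  have hcover : Iic b ∪ Icc b c ∪ Ici c = univ := by
    refine eq_univ_of_forall fun s => ?_
    rcases le_or_gt s b with hb | hb
    · exact Or.inl (Or.inl hb)
    rcases le_or_gt c s with hc | hc
    · exact Or.inr hc
    · exact Or.inl (Or.inr ⟨hb.le, hc.le⟩)
  rw [← continuousOn_univ, ← hcover]
  exact (hleft.union_of_isClosed hmid isClosed_Iic isClosed_Icc).union_of_isClosed hright
    (isClosed_Iic.union isClosed_Icc) isClosed_Ici

theorem beta₀_mem_Icc (hbc : b < c) (hAB : A < B)
    (hβ₀ : ∀ V, β₀ V = b + (V - B) * (c - b) / (A - B)) {V : ℝ} (hV : V ∈ Icc A B) :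
    β₀ V ∈ Icc b c := by
  have hθ : (V - B) * (c - b) / (A - B) = (B - V) / (B - A) * (c - b) := by
    rw [div_mul_eq_mul_div, ← neg_div_neg_eq]; ring_nf
  have hθ0 : 0 ≤ (B - V) / (B - A) := div_nonneg (by linarith [hV.2]) (by linarith)
  have hθ1 : (B - V) / (B - A) ≤ 1 := (div_le_one (by linarith)).2 (by linarith [hV.1])
  rw [hβ₀, hθ]
  constructor <;> nlinarith

theorem phi_beta₀ (hbc : b < c) (hAB : A < B)
    (hφm : ∀ s ∈ Icc b c, φ s = (A * (s - b) - B * (s - c)) / (c - b))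
    (hβ₀ : ∀ V, β₀ V = b + (V - B) * (c - b) / (A - B)) {V : ℝ} (hV : β₀ V ∈ Icc b c) :
    φ (β₀ V) = V := by
  have hcb : c - b ≠ 0 := (sub_pos.2 hbc).ne'
  have hAB' : A - B ≠ 0 := (sub_neg.2 hAB).ne
  rw [hφm _ hV, hβ₀]
  field_simp
  ring

theorem le_beta₂ (hα₂ : 0 < α₂) (hA : A = α₂ * c + γ₂) (hβ₂ : ∀ V, β₂ V = (V - γ₂) / α₂)
    {V : ℝ} (hV : A ≤ V) : c ≤ β₂ V := by
  rw [hβ₂, le_div_iff₀ hα₂]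
  linarith

theorem phi_beta₂ (hα₂ : 0 < α₂) (hφ2 : ∀ u, c ≤ u → φ u = α₂ * u + γ₂)
    (hβ₂ : ∀ V, β₂ V = (V - γ₂) / α₂) {V : ℝ} (hV : c ≤ β₂ V) : φ (β₂ V) = V := by
  rw [hφ2 _ hV, hβ₂]
  field_simp
  ring

theorem phi_le_of_mem_Icc_beta (hbc : b < c) (hAB : A < B) (hα₂ : 0 < α₂)
    (hφm : ∀ s ∈ Icc b c, φ s = (A * (s - b) - B * (s - c)) / (c - b))
    (hφ2 : ∀ u, c ≤ u → φ u = α₂ * u + γ₂)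
    (hβ₀ : ∀ V, β₀ V = b + (V - B) * (c - b) / (A - B)) (hβ₂ : ∀ V, β₂ V = (V - γ₂) / α₂)
    {V s : ℝ} (hb : b ≤ β₀ V) (hs : s ∈ Icc (β₀ V) (β₂ V)) : φ s ≤ V := by
  rcases le_or_gt s c with hsc | hcs
  · have hslope : (s - b) * (A - B) ≤ (V - B) * (c - b) := by
      have h := hs.1
      rw [hβ₀, ← le_sub_iff_add_le', div_le_iff_of_neg (sub_neg.2 hAB)] at h
      exact h
    rw [hφm s ⟨hb.trans hs.1, hsc⟩, div_le_iff₀ (sub_pos.2 hbc)]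
    linarith
  · have h := hs.2
    rw [hβ₂, le_div_iff₀ hα₂] at h
    rw [hφ2 s hcs.le]
    linarith

end PiecewiseLinear

theorem stmt_3_general (b c α₁ α₂ γ₁ γ₂ A B : ℝ) (hbc : b < c)
    (hα₂ : 0 < α₂)
    (hA : A = α₂ * c + γ₂) (hB : B = α₁ * b + γ₁) (hAB : A < B)
    (φ β₀ β₂ : ℝ → ℝ)
    (hφ1 : ∀ u, u ≤ b → φ u = α₁ * u + γ₁)
    (hφ0 : ∀ u, b < u → u < c → φ u = (A * (u - b) - B * (u - c)) / (c - b))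
    (hφ2 : ∀ u, c ≤ u → φ u = α₂ * u + γ₂)
    (hβ₀ : ∀ V, β₀ V = b + (V - B) * (c - b) / (A - B))
    (hβ₂ : ∀ V, β₂ V = (V - γ₂) / α₂)
    (g : ℝ → ℝ) (hg : ContDiff ℝ 1 g) (hg' : ∀ x, 0 ≤ deriv g x)
    (G : ℝ → ℝ) (hG : ∀ u, G u = ∫ s in (0:ℝ)..u, g (φ s))
    (Q : Set (ℝ × ℝ)) (hQ : IsOpen Q)
    (v lam : ℝ × ℝ → ℝ)
    (hv : ContDiffOn ℝ 2 v Q)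
    (hvA : ∀ p ∈ Q, A ≤ v p) (hvB : ∀ p ∈ Q, v p ≤ B)
    (hlam : ContDiffOn ℝ 1 lam Q)
    (hlamt : ∀ p ∈ Q, 0 ≤ pderivT lam p)
    (u : ℝ × ℝ → ℝ)
    (hu : ∀ p, u p = (1 - lam p) * β₀ (v p) + lam p * β₂ (v p))
    (heq : ∀ p ∈ Q, pderivT u p = pderivXX v p)
    (Gstar : ℝ × ℝ → ℝ)
    (hGstar : ∀ p, Gstar p = (1 - lam p) * G (β₀ (v p)) + lam p * G (β₂ (v p))) :
    ∀ p ∈ Q, pderivT Gstar p ≤ g (v p) * pderivXX v p := by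
  intro p hp
  have hφm := phi_eq_of_mem_Icc hbc hA hB hφ1 hφ0 hφ2
  have hGd : ∀ y, HasDerivAt G (g (φ y)) y := by
    rw [funext hG]
    exact ((hg.continuous.comp (continuous_phi hφ1 hφm hφ2)).integral_hasStrictDerivAt 0 ·
      |>.hasDerivAt)
  have hV : v p ∈ Icc A B := ⟨hvA p hp, hvB p hp⟩
  have hβ₀V := beta₀_mem_Icc hbc hAB hβ₀ hV
  have hβ₂V := le_beta₂ hα₂ hA hβ₂ hV.1
  have hβ₀d : Differentiable ℝ β₀ := by rw [funext hβ₀]; fun_prop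
  have hβ₂d : Differentiable ℝ β₂ := by rw [funext hβ₂]; fun_prop
  have hvd := ((hv.contDiffAt (hQ.mem_nhds hp)).differentiableAt (by norm_num)).comp_mk_snd
  have hlamd := ((hlam.contDiffAt (hQ.mem_nhds hp)).differentiableAt one_ne_zero).comp_mk_snd
  rw [← heq p hp, pderivT, pderivT, funext hGstar, funext hu]
  refine deriv_mix_comp_le ((hβ₀d _).comp _ hvd) ((hβ₂d _).comp _ hvd) hlamd ?_ ?_
    (hlamt p hp) ?_
  · simpa only [phi_beta₀ hbc hAB hφm hβ₀ hβ₀V] using hGd (β₀ (v p))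
  · simpa only [phi_beta₂ hα₂ hφ2 hβ₂ hβ₂V] using hGd (β₂ (v p))
  · have hgmono : Monotone g := monotone_of_deriv_nonneg (hg.differentiable one_ne_zero) hg'
    exact sub_le_mul_sub_of_hasDerivAt_le hGd
      (fun s hs => hgmono (phi_le_of_mem_Icc_beta hbc hAB hα₂ hφm hφ2 hβ₀ hβ₂ hβ₀V.1 hs))
      (hβ₀V.2.trans hβ₂V)

theorem stmt_3 (b c α₁ α₂ γ₁ γ₂ A B : ℝ) (hbc : b < c)
    (hα₁ : 0 < α₁) (hα₂ : 0 < α₂)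
    (hA : A = α₂ * c + γ₂) (hB : B = α₁ * b + γ₁) (hAB : A < B)
    (φ β₀ β₂ : ℝ → ℝ)
    (hφ1 : ∀ u, u ≤ b → φ u = α₁ * u + γ₁)
    (hφ0 : ∀ u, b < u → u < c → φ u = (A * (u - b) - B * (u - c)) / (c - b))
    (hφ2 : ∀ u, c ≤ u → φ u = α₂ * u + γ₂)
    (hβ₀ : ∀ V, β₀ V = b + (V - B) * (c - b) / (A - B))
    (hβ₂ : ∀ V, β₂ V = (V - γ₂) / α₂)
    (g : ℝ → ℝ) (hg : ContDiff ℝ 1 g) (hg' : ∀ x, 0 ≤ deriv g x)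
    (G : ℝ → ℝ) (hG : ∀ u, G u = ∫ s in (0:ℝ)..u, g (φ s))
    (Q : Set (ℝ × ℝ)) (hQ : IsOpen Q)
    (v lam : ℝ × ℝ → ℝ)
    (hv : ContDiffOn ℝ 2 v Q)
    (hvA : ∀ p ∈ Q, A ≤ v p) (hvB : ∀ p ∈ Q, v p ≤ B)
    (hlam : ContDiffOn ℝ 1 lam Q)
    (hlamt : ∀ p ∈ Q, 0 ≤ pderivT lam p)
    (u : ℝ × ℝ → ℝ)
    (hu : ∀ p, u p = (1 - lam p) * β₀ (v p) + lam p * β₂ (v p))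
    (heq : ∀ p ∈ Q, pderivT u p = pderivXX v p)
    (Gstar : ℝ × ℝ → ℝ)
    (hGstar : ∀ p, Gstar p = (1 - lam p) * G (β₀ (v p)) + lam p * G (β₂ (v p))) :
    ∀ p ∈ Q, pderivT Gstar p ≤ g (v p) * pderivXX v p :=
  stmt_3_general b c α₁ α₂ γ₁ γ₂ A B hbc hα₂ hA hB hAB φ β₀ β₂ hφ1 hφ0 hφ2 hβ₀ hβ₂ g hg hg' G hG Q
    hQ v lam hv hvA hvB hlam hlamt u hu heq Gstar hGstar
end

section
/- Fix reals b < c, α₁ > 0, α₂ > 0, γ₁, γ₂ with A := α₂·c + γ₂ < B := α₁·b + γ₁. Define φ : ℝ → ℝ by φ(u) = α₁·u + γ₁ for u ≤ b, φ(u) = (A·(u−b) − B·(u−c))/(c−b) for b < u < c, and φ(u) = α₂·u + γ₂ for u ≥ c; define β₀(V) := b + (V−B)·(c−b)/(A−B) and β₂(V) := (V−γ₂)/α₂. Let L, T > 0, Q := (0,L)×(0,T), let v : ℝ² → ℝ be C² with A ≤ v ≤ B on Q, let λ : ℝ² → ℝ be C¹ with ∂ₜλ ≥ 0 and 0 ≤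 λ ≤ 1 on Q, set u := (1−λ)·(β₀∘v) + λ·(β₂∘v), and assume ∂ₜu = ∂²ₓv at every point of Q. Then for every C¹ function g : ℝ → ℝ with g' ≥ 0 and every nonnegative smooth function ψ : ℝ² → ℝ with compact support contained in Q, one has ∫∫_Q [ G*·∂ₜψ − g(v)·∂ₓv·∂ₓψ − g'(v)·(∂ₓv)²·ψ ] dx dt ≥ 0, where G(u) := ∫₀ᵘ g(φ(s)) ds and G*(x,t) := (1−λ(x,t))·G(β₀(v(x,t))) + λ(x,t)·G(β₂(v(x,t))). -/
open MeasureTheory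

/-- Partial derivative in the first (space) variable. -/
noncomputable def pderivX (f : ℝ × ℝ → ℝ) (p : ℝ × ℝ) : ℝ :=
  deriv (fun x => f (x, p.2)) p.1

lemma hasDerivAt_sliceT {f : ℝ × ℝ → ℝ} {p : ℝ × ℝ} (hf : DifferentiableAt ℝ f p) :
    HasDerivAt (fun t => f (p.1, t)) (fderiv ℝ f p (0, 1)) p.2 := by
  have h : HasDerivAt (fun t : ℝ => ((p.1 : ℝ), t)) ((0 : ℝ), (1 : ℝ)) p.2 :=
    (hasDerivAt_const _ _).prodMk (hasDerivAt_id _)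
  have := hf.hasFDerivAt.comp_hasDerivAt p.2 h
  exact this

lemma hasDerivAt_sliceX {f : ℝ × ℝ → ℝ} {p : ℝ × ℝ} (hf : DifferentiableAt ℝ f p) :
    HasDerivAt (fun x => f (x, p.2)) (fderiv ℝ f p (1, 0)) p.1 := by
  have h : HasDerivAt (fun x : ℝ => (x, (p.2 : ℝ))) ((1 : ℝ), (0 : ℝ)) p.1 :=
    (hasDerivAt_id _).prodMk (hasDerivAt_const _ _)
  have := hf.hasFDerivAt.comp_hasDerivAt p.1 h
  exact this

lemma pderivT_eq {f : ℝ × ℝ → ℝ} {p : ℝ × ℝ} (hf : DifferentiableAt ℝ f p) :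
    pderivT f p = fderiv ℝ f p (0, 1) := (hasDerivAt_sliceT hf).deriv

lemma pderivX_eq {f : ℝ × ℝ → ℝ} {p : ℝ × ℝ} (hf : DifferentiableAt ℝ f p) :
    pderivX f p = fderiv ℝ f p (1, 0) := (hasDerivAt_sliceX hf).deriv


section phi
variable {b c α₁ α₂ γ₁ γ₂ A B : ℝ} (hbc : b < c)
  (hα₁ : 0 < α₁) (hα₂ : 0 < α₂)
  (hA : A = α₂ * c + γ₂) (hB : B = α₁ * b + γ₁) (hAB : A < B)
  {φ β₀ β₂ : ℝ → ℝ}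
  (hφ1 : ∀ u, u ≤ b → φ u = α₁ * u + γ₁)
  (hφ0 : ∀ u, b < u → u < c → φ u = (A * (u - b) - B * (u - c)) / (c - b))
  (hφ2 : ∀ u, c ≤ u → φ u = α₂ * u + γ₂)
  (hβ₀ : ∀ V, β₀ V = b + (V - B) * (c - b) / (A - B))
  (hβ₂ : ∀ V, β₂ V = (V - γ₂) / α₂)

include hbc hα₁ hα₂ hA hB hAB hφ1 hφ0 hφ2 in
lemma phi_cont : Continuous φ := by
  have hcb : c - b ≠ 0 := sub_ne_zero_of_ne hbc.ne'
  have hφeq : φ = fun u => if u ≤ b then α₁ * u + γ₁ else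
      (if u ≤ c then (A * (u - b) - B * (u - c)) / (c - b) else α₂ * u + γ₂) := by
    funext u
    by_cases h1 : u ≤ b
    · simp [h1, hφ1 u h1]
    · push_neg at h1
      by_cases h2 : u ≤ c
      · rw [if_neg (not_le.mpr h1), if_pos h2]
        by_cases h3 : u < c
        · exact hφ0 u h1 h3
        · have hu : u = c := le_antisymm h2 (not_lt.mp h3)
          rw [hu, hφ2 c le_rfl]
          field_simp
          rw [hA]; ring
      · push_neg at h2
        rw [if_neg (not_le.mpr h1), if_neg (not_le.mpr h2), hφ2 u h2.le]
  rw [hφeq]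
  apply Continuous.if_le
  · fun_prop
  · apply Continuous.if_le
    · fun_prop
    · fun_prop
    · fun_prop
    · fun_prop
    · intro x hx; subst hx; field_simp; rw [hA]; ring
  · fun_prop
  · fun_prop
  · intro x hx; subst hx
    rw [if_pos hbc.le]
    field_simp
    nlinarith [hB]

include hbc hAB hβ₀ hφ1 hφ0 hφ2 hA hB in
lemma phi_beta0 {V : ℝ} (h1 : A ≤ V) (h2 : V ≤ B) : φ (β₀ V) = V := by
  have hcb : (0:ℝ) < c - b := by linarith
  have hABn : A - B < 0 := by linarith
  have hABne : A - B ≠ 0 := by linarith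
  by_cases hVB : V = B
  · have h0 : β₀ V = b := by rw [hβ₀, hVB]; simp
    rw [h0, hφ1 b le_rfl, hVB, hB]
  by_cases hVA : V = A
  · have h0 : β₀ V = c := by
      rw [hβ₀, hVA, mul_comm, mul_div_assoc, div_self hABne, mul_one]; ring
    rw [h0, hφ2 c le_rfl, ← hA, hVA]
  have h1' : A < V := lt_of_le_of_ne h1 (Ne.symm hVA)
  have h2' : V < B := lt_of_le_of_ne h2 hVB
  have hb : b < β₀ V := by
    rw [hβ₀]
    have : 0 < (V - B) * (c - b) / (A - B) := by
      rw [div_pos_iff]; right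
      exact ⟨by nlinarith, by linarith⟩
    linarith
  have hc : β₀ V < c := by
    rw [hβ₀]
    have : (V - B) * (c - b) / (A - B) < c - b := by
      rw [div_lt_iff_of_neg hABn]; nlinarith
    linarith
  rw [hφ0 _ hb hc, hβ₀]
  field_simp
  ring

include hα₂ hA hβ₂ in
lemma beta2_ge {V : ℝ} (h1 : A ≤ V) : c ≤ β₂ V := by
  rw [hβ₂, le_div_iff₀ hα₂]
  nlinarith

include hα₂ hA hβ₂ hφ2 in
lemma phi_beta2 {V : ℝ} (h1 : A ≤ V) : φ (β₂ V) = V := by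
  rw [hφ2 _ (beta2_ge hα₂ hA hβ₂ h1), hβ₂]
  field_simp
  ring

include hbc hα₂ hAB hA hβ₀ hβ₂ in
lemma beta0_le_beta2 {V : ℝ} (h1 : A ≤ V) (h2 : V ≤ B) :
    b ≤ β₀ V ∧ β₀ V ≤ c ∧ c ≤ β₂ V := by
  have hcb : (0:ℝ) < c - b := by linarith
  have hABn : A - B < 0 := by linarith
  refine ⟨?_, ?_, beta2_ge hα₂ hA hβ₂ h1⟩
  · rw [hβ₀]
    have : 0 ≤ (V - B) * (c - b) / (A - B) := by
      rw [div_nonneg_iff]; right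
      exact ⟨by nlinarith, by linarith⟩
    linarith
  · rw [hβ₀]
    have : (V - B) * (c - b) / (A - B) ≤ c - b := by
      rw [div_le_iff_of_neg hABn]; nlinarith
    linarith

include hbc hα₁ hα₂ hA hB hAB hφ1 hφ0 hφ2 hβ₀ hβ₂ in
lemma phi_le {V s : ℝ} (h1 : A ≤ V) (h2 : V ≤ B)
    (hs : s ∈ Set.Icc (β₀ V) (β₂ V)) : φ s ≤ V := by
  have hcb : (0:ℝ) < c - b := by linarith
  have hABn : A - B < 0 := by linarith
  have hABne : A - B ≠ 0 := by linarith
  obtain ⟨hb0, h0c, hc2⟩ := beta0_le_beta2 hbc hα₂ hA hAB hβ₀ hβ₂ h1 h2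
  rcases le_or_gt c s with h | h
  · rw [hφ2 _ h]
    have h2' : s ≤ (V - γ₂) / α₂ := by rw [← hβ₂]; exact hs.2
    rw [le_div_iff₀ hα₂] at h2'
    nlinarith
  · rcases le_or_gt s b with h' | h'
    · -- forces s = b, β₀ V = b, V = B
      have hsb : β₀ V ≤ b := le_trans hs.1 h'
      have hq : (V - B) * (c - b) / (A - B) ≤ 0 := by
        rw [hβ₀] at hsb; linarith
      have hq' : 0 ≤ (V - B) * (c - b) / (A - B) := by
        rw [hβ₀] at hb0; linarith
      have hq0 : (V - B) * (c - b) / (A - B) = 0 := le_antisymm hq hq'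
      have hVB : V = B := by
        rw [div_eq_zero_iff] at hq0
        rcases hq0 with hq0 | hq0
        · rcases mul_eq_zero.mp hq0 with h'' | h'' <;> [linarith; linarith]
        · exact absurd hq0 hABne
      rw [hφ1 s h', hVB, hB]
      nlinarith
    · rw [hφ0 _ h' h, div_le_iff₀ hcb]
      have hs1 : b + (V - B) * (c - b) / (A - B) ≤ s := by rw [← hβ₀]; exact hs.1
      have hkey : (s - b) * (A - B) ≤ (V - B) * (c - b) := by
        have : (V - B) * (c - b) / (A - B) ≤ s - b := by linarith
        exact (div_le_iff_of_neg hABn).mp this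
      nlinarith
end phi

section intbound
variable {b c α₁ α₂ γ₁ γ₂ A B : ℝ} (hbc : b < c)
  (hα₁ : 0 < α₁) (hα₂ : 0 < α₂)
  (hA : A = α₂ * c + γ₂) (hB : B = α₁ * b + γ₁) (hAB : A < B)
  {φ β₀ β₂ : ℝ → ℝ}
  (hφ1 : ∀ u, u ≤ b → φ u = α₁ * u + γ₁)
  (hφ0 : ∀ u, b < u → u < c → φ u = (A * (u - b) - B * (u - c)) / (c - b))
  (hφ2 : ∀ u, c ≤ u → φ u = α₂ * u + γ₂)
  (hβ₀ : ∀ V, β₀ V = b + (V - B) * (c - b) / (A - B))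
  (hβ₂ : ∀ V, β₂ V = (V - γ₂) / α₂)

include hbc hα₁ hα₂ hA hB hAB hφ1 hφ0 hφ2 hβ₀ hβ₂ in
lemma int_bound {g : ℝ → ℝ} (hg : ContDiff ℝ 1 g) (hg' : ∀ x, 0 ≤ deriv g x)
    {V : ℝ} (h1 : A ≤ V) (h2 : V ≤ B) :
    (∫ s in (0:ℝ)..(β₂ V), g (φ s)) - (∫ s in (0:ℝ)..(β₀ V), g (φ s))
      ≤ g V * (β₂ V - β₀ V) := by
  have hφc : Continuous φ := phi_cont hbc hα₁ hα₂ hA hB hAB hφ1 hφ0 hφ2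
  have hgφ : Continuous fun s => g (φ s) := hg.continuous.comp hφc
  obtain ⟨h0b, h0c, hc2⟩ := beta0_le_beta2 hbc hα₂ hA hAB hβ₀ hβ₂ h1 h2
  have hle : β₀ V ≤ β₂ V := le_trans h0c hc2
  have hmono : Monotone g := monotone_of_deriv_nonneg (hg.differentiable one_ne_zero) hg'
  have step1 : (∫ s in (0:ℝ)..(β₂ V), g (φ s)) - (∫ s in (0:ℝ)..(β₀ V), g (φ s))
      = ∫ s in (β₀ V)..(β₂ V), g (φ s) :=
    intervalIntegral.integral_interval_sub_left (hgφ.intervalIntegrable _ _)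
      (hgφ.intervalIntegrable _ _)
  rw [step1]
  have step2 : (∫ s in (β₀ V)..(β₂ V), g (φ s)) ≤ ∫ _s in (β₀ V)..(β₂ V), g V := by
    apply intervalIntegral.integral_mono_on hle (hgφ.intervalIntegrable _ _)
      intervalIntegrable_const
    intro s hs
    exact hmono (phi_le hbc hα₁ hα₂ hA hB hAB hφ1 hφ0 hφ2 hβ₀ hβ₂ h1 h2 hs)
  calc (∫ s in (β₀ V)..(β₂ V), g (φ s)) ≤ ∫ _s in (β₀ V)..(β₂ V), g V := step2
    _ = g V * (β₂ V - β₀ V) := by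
        rw [intervalIntegral.integral_const, smul_eq_mul]; ring
end intbound


theorem stmt_4 (b c α₁ α₂ γ₁ γ₂ A B : ℝ) (hbc : b < c)
    (hα₁ : 0 < α₁) (hα₂ : 0 < α₂)
    (hA : A = α₂ * c + γ₂) (hB : B = α₁ * b + γ₁) (hAB : A < B)
    (φ β₀ β₂ : ℝ → ℝ)
    (hφ1 : ∀ u, u ≤ b → φ u = α₁ * u + γ₁)
    (hφ0 : ∀ u, b < u → u < c → φ u = (A * (u - b) - B * (u - c)) / (c - b))
    (hφ2 : ∀ u, c ≤ u → φ u = α₂ * u + γ₂)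
    (hβ₀ : ∀ V, β₀ V = b + (V - B) * (c - b) / (A - B))
    (hβ₂ : ∀ V, β₂ V = (V - γ₂) / α₂)
    (L T : ℝ) (hL : 0 < L) (hT : 0 < T)
    (Q : Set (ℝ × ℝ)) (hQdef : Q = Set.Ioo 0 L ×ˢ Set.Ioo 0 T)
    (v lam : ℝ × ℝ → ℝ)
    (hv : ContDiff ℝ 2 v)
    (hvA : ∀ p ∈ Q, A ≤ v p) (hvB : ∀ p ∈ Q, v p ≤ B)
    (hlam : ContDiff ℝ 1 lam)
    (hlamt : ∀ p ∈ Q, 0 ≤ pderivT lam p)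
    (hlam0 : ∀ p ∈ Q, 0 ≤ lam p) (hlam1 : ∀ p ∈ Q, lam p ≤ 1)
    (u : ℝ × ℝ → ℝ)
    (hu : ∀ p, u p = (1 - lam p) * β₀ (v p) + lam p * β₂ (v p))
    (heq : ∀ p ∈ Q, pderivT u p = pderivXX v p) :
    ∀ g : ℝ → ℝ, ContDiff ℝ 1 g → (∀ x, 0 ≤ deriv g x) →
    ∀ ψ : ℝ × ℝ → ℝ, ContDiff ℝ (⊤ : ℕ∞) ψ → HasCompactSupport ψ → tsupport ψ ⊆ Q →
      (∀ p, 0 ≤ ψ p) →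
    0 ≤ ∫ p in Q,
        (((1 - lam p) * (∫ s in (0:ℝ)..(β₀ (v p)), g (φ s)) +
            lam p * (∫ s in (0:ℝ)..(β₂ (v p)), g (φ s))) * pderivT ψ p -
          g (v p) * pderivX v p * pderivX ψ p -
          deriv g (v p) * (pderivX v p) ^ 2 * ψ p) := by
  intro g hg hg' ψ hψ hψc hψQ hψ0
  -- basic differentiability facts
  have hv' : Differentiable ℝ v := hv.differentiable two_ne_zero
  have hψ1 : ContDiff ℝ 1 ψ := hψ.of_le (by simp)
  have hψd : Differentiable ℝ ψ := hψ1.differentiable one_ne_zero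
  have hlamd : Differentiable ℝ lam := hlam.differentiable one_ne_zero
  have hφc : Continuous φ := phi_cont hbc hα₁ hα₂ hA hB hAB hφ1 hφ0 hφ2
  have hgφ : Continuous fun s => g (φ s) := hg.continuous.comp hφc
  -- abstract the auxiliary functions
  obtain ⟨G, hG⟩ : ∃ G : ℝ → ℝ, ∀ y, G y = ∫ s in (0:ℝ)..y, g (φ s) := ⟨_, fun _ => rfl⟩
  have hGd : ∀ y, HasDerivAt G (g (φ y)) y := by
    intro y
    rw [funext hG]
    exact intervalIntegral.integral_hasDerivAt_right (hgφ.intervalIntegrable _ _)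
      (hgφ.stronglyMeasurableAtFilter _ _) hgφ.continuousAt
  have hG1 : ContDiff ℝ 1 G := by
    rw [contDiff_one_iff_deriv]
    refine ⟨fun y => (hGd y).differentiableAt, ?_⟩
    have : deriv G = fun y => g (φ y) := funext fun y => (hGd y).deriv
    rw [this]; exact hgφ
  -- β₀, β₂ as smooth functions
  have hβ₀c : ContDiff ℝ 1 β₀ := by
    rw [funext hβ₀]
    exact contDiff_const.add (((contDiff_id.sub contDiff_const).mul contDiff_const).div_const _)
  have hβ₂c : ContDiff ℝ 1 β₂ := by
    rw [funext hβ₂]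
    exact (contDiff_id.sub contDiff_const).div_const _
  have hβ₀d : ∀ V, HasDerivAt β₀ ((c - b) / (A - B)) V := by
    intro V
    rw [funext hβ₀]
    have := ((((hasDerivAt_id V).sub_const B).mul_const (c - b)).div_const (A - B)).const_add b
    simpa using this
  have hβ₂d : ∀ V, HasDerivAt β₂ (1 / α₂) V := by
    intro V
    rw [funext hβ₂]
    have := (((hasDerivAt_id V).sub_const γ₂).div_const α₂)
    simpa using this
  obtain ⟨Gs, hGs⟩ : ∃ Gs : ℝ × ℝ → ℝ,
      ∀ p, Gs p = (1 - lam p) * G (β₀ (v p)) + lam p * G (β₂ (v p)) := ⟨_, fun _ => rfl⟩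
  obtain ⟨W, hW⟩ : ∃ W : ℝ × ℝ → ℝ,
      ∀ p, W p = g (v p) * fderiv ℝ v p (1, 0) := ⟨_, fun _ => rfl⟩
  have hGs1 : ContDiff ℝ 1 Gs := by
    rw [funext hGs]
    exact ((contDiff_const.sub hlam).mul (hG1.comp (hβ₀c.comp (hv.of_le one_le_two)))).add
      (hlam.mul (hG1.comp (hβ₂c.comp (hv.of_le one_le_two))))
  have hvxC1 : ContDiff ℝ 1 (fun p => fderiv ℝ v p (1, 0)) :=
    (hv.fderiv_right (m := 1) (by norm_num)).clm_apply contDiff_const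
  have hW1 : ContDiff ℝ 1 W := by
    rw [funext hW]
    exact (hg.comp (hv.of_le one_le_two)).mul hvxC1
  -- rewrite the goal in fderiv form
  have e1 : pderivT ψ = fun p => fderiv ℝ ψ p (0, 1) := funext fun p => pderivT_eq (hψd p)
  have e2 : pderivX ψ = fun p => fderiv ℝ ψ p (1, 0) := funext fun p => pderivX_eq (hψd p)
  have e3 : pderivX v = fun p => fderiv ℝ v p (1, 0) := funext fun p => pderivX_eq (hv' p)
  simp only [e1, e2, e3, ← hG, ← hGs]
  have eW : ∀ p, g (v p) * fderiv ℝ v p (1, 0) * fderiv ℝ ψ p (1, 0)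
      = W p * fderiv ℝ ψ p (1, 0) := fun p => by rw [hW]
  simp only [eW]
  -- compact support and integrability
  have hCS : ∀ F : ℝ × ℝ → ℝ, (∀ p, p ∉ tsupport ψ → F p = 0) → HasCompactSupport F :=
    fun F hF => HasCompactSupport.intro hψc hF
  have hψz : ∀ p, p ∉ tsupport ψ → ψ p = 0 := fun p hp => image_eq_zero_of_notMem_tsupport hp
  have hψfz : ∀ p, p ∉ tsupport ψ → fderiv ℝ ψ p = 0 := fun p hp =>
    fderiv_of_notMem_tsupport _ hp
  have hGsC : Continuous Gs := hGs1.continuous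
  have hWC : Continuous W := hW1.continuous
  have hψC : Continuous ψ := hψ.continuous
  have hfψt : Continuous fun p => fderiv ℝ ψ p (0, 1) :=
    (hψ1.continuous_fderiv one_ne_zero).clm_apply continuous_const
  have hfψx : Continuous fun p => fderiv ℝ ψ p (1, 0) :=
    (hψ1.continuous_fderiv one_ne_zero).clm_apply continuous_const
  have hfGs : Continuous fun p => fderiv ℝ Gs p (0, 1) :=
    (hGs1.continuous_fderiv one_ne_zero).clm_apply continuous_const
  have hfW : Continuous fun p => fderiv ℝ W p (1, 0) :=
    (hW1.continuous_fderiv one_ne_zero).clm_apply continuous_const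
  have hdgv : Continuous fun p => deriv g (v p) :=
    (hg.continuous_deriv le_rfl).comp hv.continuous
  have hfvx : Continuous fun p => fderiv ℝ v p (1, 0) := hvxC1.continuous
  have i1 : Integrable (fun p => fderiv ℝ Gs p (0, 1) * ψ p) :=
    (hfGs.mul hψC).integrable_of_hasCompactSupport
      (hCS _ fun p hp => by simp only [Pi.mul_apply, Pi.pow_apply]; rw [hψz p hp, mul_zero])
  have i2 : Integrable (fun p => Gs p * fderiv ℝ ψ p (0, 1)) :=
    (hGsC.mul hfψt).integrable_of_hasCompactSupport
      (hCS _ fun p hp => by simp only [Pi.mul_apply, Pi.pow_apply]; rw [hψfz p hp]; simp)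
  have i3 : Integrable (fun p => Gs p * ψ p) :=
    (hGsC.mul hψC).integrable_of_hasCompactSupport
      (hCS _ fun p hp => by simp only [Pi.mul_apply, Pi.pow_apply]; rw [hψz p hp, mul_zero])
  have i4 : Integrable (fun p => fderiv ℝ W p (1, 0) * ψ p) :=
    (hfW.mul hψC).integrable_of_hasCompactSupport
      (hCS _ fun p hp => by simp only [Pi.mul_apply, Pi.pow_apply]; rw [hψz p hp, mul_zero])
  have i5 : Integrable (fun p => W p * fderiv ℝ ψ p (1, 0)) :=
    (hWC.mul hfψx).integrable_of_hasCompactSupport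
      (hCS _ fun p hp => by simp only [Pi.mul_apply, Pi.pow_apply]; rw [hψfz p hp]; simp)
  have i6 : Integrable (fun p => W p * ψ p) :=
    (hWC.mul hψC).integrable_of_hasCompactSupport
      (hCS _ fun p hp => by simp only [Pi.mul_apply, Pi.pow_apply]; rw [hψz p hp, mul_zero])
  have i7 : Integrable (fun p => deriv g (v p) * (fderiv ℝ v p (1, 0)) ^ 2 * ψ p) :=
    ((hdgv.mul (hfvx.pow 2)).mul hψC).integrable_of_hasCompactSupport
      (hCS _ fun p hp => by simp only [Pi.mul_apply, Pi.pow_apply]; rw [hψz p hp, mul_zero])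
  -- integration by parts
  have hIBP1 : ∫ p, Gs p * fderiv ℝ ψ p (0, 1) = - ∫ p, fderiv ℝ Gs p (0, 1) * ψ p :=
    integral_mul_fderiv_eq_neg_fderiv_mul_of_integrable i1 i2 i3
      (fun x _ => hGs1.differentiable one_ne_zero x) (fun x _ => hψd x)
  have hIBP2 : ∫ p, W p * fderiv ℝ ψ p (1, 0) = - ∫ p, fderiv ℝ W p (1, 0) * ψ p :=
    integral_mul_fderiv_eq_neg_fderiv_mul_of_integrable i4 i5 i6
      (fun x _ => hW1.differentiable one_ne_zero x) (fun x _ => hψd x)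
  -- pointwise product rule for W  (fact a)
  have facta : ∀ p : ℝ × ℝ, fderiv ℝ W p (1, 0)
      = deriv g (v p) * (fderiv ℝ v p (1, 0)) ^ 2 + g (v p) * pderivXX v p := by
    intro p
    have hx2 : ContDiff ℝ 2 fun x => v (x, p.2) :=
      hv.comp (contDiff_id.prodMk contDiff_const)
    have hd1 : ContDiff ℝ 1 (deriv fun x => v (x, p.2)) := by
      have h21 : ((2 : WithTop ℕ∞)) = 1 + 1 := by norm_num
      rw [h21] at hx2
      exact (contDiff_succ_iff_deriv.mp hx2).2.2
    have hder : HasDerivAt (deriv fun x => v (x, p.2)) (pderivXX v p) p.1 :=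
      ((hd1.differentiable one_ne_zero) p.1).hasDerivAt
    have hslice : (deriv fun x => v (x, p.2)) = fun x => fderiv ℝ v (x, p.2) (1, 0) :=
      funext fun x => pderivX_eq (hv' (x, p.2))
    rw [hslice] at hder
    have hgd : HasDerivAt g (deriv g (v p)) (v p) :=
      ((hg.differentiable one_ne_zero) (v p)).hasDerivAt
    have h2 : HasDerivAt (fun x => g (v (x, p.2)))
        (deriv g (v p) * fderiv ℝ v p (1, 0)) p.1 :=
      hgd.comp p.1 (hasDerivAt_sliceX (hv' p))
    have hmul : HasDerivAt (fun x => g (v (x, p.2)) * fderiv ℝ v (x, p.2) (1, 0))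
        ((deriv g (v p) * fderiv ℝ v p (1, 0)) * fderiv ℝ v (p.1, p.2) (1, 0)
          + g (v (p.1, p.2)) * pderivXX v p) p.1 := h2.mul hder
    have hWp : fderiv ℝ W p (1, 0) = pderivX W p := (pderivX_eq ((hW1.differentiable one_ne_zero) p)).symm
    rw [hWp]
    have : pderivX W p = deriv (fun x => W (x, p.2)) p.1 := rfl
    rw [this]
    have hfun : (fun x => W (x, p.2)) = fun x => g (v (x, p.2)) * fderiv ℝ v (x, p.2) (1, 0) :=
      funext fun x => hW (x, p.2)
    rw [hfun, hmul.deriv]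
    ring
  -- key pointwise inequality (fact b)
  have factb : ∀ p ∈ Q, fderiv ℝ Gs p (0, 1) ≤ g (v p) * pderivXX v p := by
    intro p hp
    have hAv : A ≤ v p := hvA p hp
    have hBv : v p ≤ B := hvB p hp
    set lt := fderiv ℝ lam p (0, 1) with hlt
    set vt := fderiv ℝ v p (0, 1) with hvt
    have hLt : HasDerivAt (fun t => lam (p.1, t)) lt p.2 := hasDerivAt_sliceT (hlamd p)
    have hVt : HasDerivAt (fun t => v (p.1, t)) vt p.2 := hasDerivAt_sliceT (hv' p)
    have hlt0 : 0 ≤ lt := by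
      have := hlamt p hp
      rwa [pderivT_eq (hlamd p)] at this
    -- chain rules
    have chain0 : HasDerivAt (fun t => G (β₀ (v (p.1, t))))
        (g (φ (β₀ (v p))) * ((c - b) / (A - B) * vt)) p.2 :=
      (hGd _).comp p.2 ((hβ₀d _).comp p.2 hVt)
    have chain2 : HasDerivAt (fun t => G (β₂ (v (p.1, t))))
        (g (φ (β₂ (v p))) * (1 / α₂ * vt)) p.2 :=
      (hGd _).comp p.2 ((hβ₂d _).comp p.2 hVt)
    rw [phi_beta0 hbc hA hB hAB hφ1 hφ0 hφ2 hβ₀ hAv hBv] at chain0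
    rw [phi_beta2 hα₂ hA hφ2 hβ₂ hAv] at chain2
    have hGst : HasDerivAt (fun t => (1 - lam (p.1, t)) * G (β₀ (v (p.1, t)))
          + lam (p.1, t) * G (β₂ (v (p.1, t))))
        ((0 - lt) * G (β₀ (v p)) + (1 - lam p) * (g (v p) * ((c - b) / (A - B) * vt))
          + (lt * G (β₂ (v p)) + lam p * (g (v p) * (1 / α₂ * vt)))) p.2 :=
      (((hasDerivAt_const p.2 (1:ℝ)).sub hLt).mul chain0).add (hLt.mul chain2)
    have hGseq : fderiv ℝ Gs p (0, 1)
        = (0 - lt) * G (β₀ (v p)) + (1 - lam p) * (g (v p) * ((c - b) / (A - B) * vt))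
          + (lt * G (β₂ (v p)) + lam p * (g (v p) * (1 / α₂ * vt))) := by
      rw [← pderivT_eq ((hGs1.differentiable one_ne_zero) p)]
      have hfun : (fun t => Gs (p.1, t)) = fun t => (1 - lam (p.1, t)) * G (β₀ (v (p.1, t)))
          + lam (p.1, t) * G (β₂ (v (p.1, t))) := funext fun t => hGs (p.1, t)
      show deriv (fun t => Gs (p.1, t)) p.2 = _
      rw [hfun]
      exact hGst.deriv
    -- derivative of u in time
    have hUt : HasDerivAt (fun t => (1 - lam (p.1, t)) * β₀ (v (p.1, t))
          + lam (p.1, t) * β₂ (v (p.1, t)))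
        ((0 - lt) * β₀ (v p) + (1 - lam p) * ((c - b) / (A - B) * vt)
          + (lt * β₂ (v p) + lam p * (1 / α₂ * vt))) p.2 :=
      (((hasDerivAt_const p.2 (1:ℝ)).sub hLt).mul ((hβ₀d _).comp p.2 hVt)).add
        (hLt.mul ((hβ₂d _).comp p.2 hVt))
    have hpu : pderivT u p = (0 - lt) * β₀ (v p) + (1 - lam p) * ((c - b) / (A - B) * vt)
          + (lt * β₂ (v p) + lam p * (1 / α₂ * vt)) := by
      have hfun : (fun t => u (p.1, t)) = fun t => (1 - lam (p.1, t)) * β₀ (v (p.1, t))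
          + lam (p.1, t) * β₂ (v (p.1, t)) := funext fun t => hu (p.1, t)
      show deriv (fun t => u (p.1, t)) p.2 = _
      rw [hfun]
      exact hUt.deriv
    have hxx : pderivXX v p = (0 - lt) * β₀ (v p) + (1 - lam p) * ((c - b) / (A - B) * vt)
          + (lt * β₂ (v p) + lam p * (1 / α₂ * vt)) := by rw [← heq p hp, hpu]
    have hIntB : G (β₂ (v p)) - G (β₀ (v p)) ≤ g (v p) * (β₂ (v p) - β₀ (v p)) := by
      rw [hG, hG]
      exact int_bound hbc hα₁ hα₂ hA hB hAB hφ1 hφ0 hφ2 hβ₀ hβ₂ hg hg' hAv hBv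
    rw [hGseq, hxx]
    nlinarith [mul_nonneg hlt0 (sub_nonneg.mpr hIntB)]
  -- move from set integral to full integral
  rw [setIntegral_eq_integral_of_forall_compl_eq_zero (f := fun p =>
      Gs p * fderiv ℝ ψ p (0, 1) - W p * fderiv ℝ ψ p (1, 0) -
        deriv g (v p) * (fderiv ℝ v p (1, 0)) ^ 2 * ψ p) ?side]
  case side =>
    intro p hp
    have hp' : p ∉ tsupport ψ := fun h => hp (hψQ h)
    simp only [hψz p hp', hψfz p hp']
    simp
  -- split the integral and use IBP
  have i25 : Integrable (fun p => Gs p * fderiv ℝ ψ p (0, 1) - W p * fderiv ℝ ψ p (1, 0)) :=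
    i2.sub i5
  have i47 : Integrable (fun p => fderiv ℝ W p (1, 0) * ψ p -
      deriv g (v p) * (fderiv ℝ v p (1, 0)) ^ 2 * ψ p) := i4.sub i7
  rw [integral_sub i25 i7, integral_sub i2 i5, hIBP1, hIBP2]
  have hT : 0 ≤ ∫ p, (fderiv ℝ W p (1, 0) * ψ p -
      deriv g (v p) * (fderiv ℝ v p (1, 0)) ^ 2 * ψ p - fderiv ℝ Gs p (0, 1) * ψ p) := by
    apply integral_nonneg
    intro p
    by_cases hp : p ∈ Q
    · have ha := facta p
      have hb := factb p hp
      have hm := mul_nonneg (sub_nonneg.mpr hb) (hψ0 p)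
      simp only [Pi.zero_apply]
      rw [ha]
      nlinarith [hm]
    · have hp' : p ∉ tsupport ψ := fun h => hp (hψQ h)
      simp [hψz p hp']
  rw [integral_sub i47 i1, integral_sub i4 i7] at hT
  linarith
end

section
/- Let T > 0 and let c₁, c₂, c₃, c₄ > 0. Let m : [0,T] → ℝ be continuous with c₂ ≤ m(t) ≤ c₃ for all t, and let D : [0,T] → ℝ be differentiable with D(t) ≥ c₁ and |D'(t)| ≤ c₄ for all t. Define λ(t) := ( ∫₀ᵗ m(s) ds ) / D(t). Then λ'(t) ≥ 0 for every t ∈ [0, min(T, c₁·c₂/(c₃·c₄))]. In particular there exists T̄ > 0 such that λ' is nonnegative on [0,T̄]. -/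
/-!
By the quotient rule, `λ' = (m D - F D') / D²` with `F(t) = ∫₀ᵗ m`. Since `0 ≤ F(t) ≤ c₃ t` and
`|D'| ≤ c₄`, the subtracted term is at most `c₃ c₄ t`, while `m D ≥ c₁ c₂`; so the numerator is
nonnegative as long as `c₃ c₄ t ≤ c₁ c₂`.
-/

open Set MeasureTheory intervalIntegral

theorem integral_mem_Icc_mul_of_mem_Icc {f : ℝ → ℝ} {a b t : ℝ} (ht : 0 ≤ t)
    (hf : IntervalIntegrable f volume 0 t) (hab : ∀ x ∈ Icc 0 t, f x ∈ Icc a b) :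
    (∫ x in 0..t, f x) ∈ Icc (a * t) (b * t) := by
  constructor
  · calc a * t = ∫ _ in 0..t, a := by simp [mul_comm]
      _ ≤ ∫ x in 0..t, f x :=
        integral_mono_on ht intervalIntegrable_const hf fun x hx => (hab x hx).1
  · calc (∫ x in 0..t, f x) ≤ ∫ _ in 0..t, b :=
        integral_mono_on ht hf intervalIntegrable_const fun x hx => (hab x hx).2
      _ = b * t := by simp [mul_comm]

theorem hasDerivWithinAt_integral_div {m D : ℝ → ℝ} {D' T t : ℝ}
    (hm : ContinuousOn m (Icc 0 T)) (ht : t ∈ Icc 0 T)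
    (hD : HasDerivWithinAt D D' (Icc 0 T) t) (hDt : D t ≠ 0) :
    HasDerivWithinAt (fun u => (∫ x in 0..u, m x) / D u)
      ((m t * D t - (∫ x in 0..t, m x) * D') / D t ^ 2) (Icc 0 T) t := by
  have : Fact (t ∈ Icc 0 T) := ⟨ht⟩
  have hint : IntervalIntegrable m volume 0 t :=
    (hm.mono (Icc_subset_Icc le_rfl ht.2)).intervalIntegrable_of_Icc ht.1
  have hF : HasDerivWithinAt (fun u => ∫ x in 0..u, m x) (m t) (Icc 0 T) t :=
    integral_hasDerivWithinAt_right hint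
      (hm.stronglyMeasurableAtFilter_nhdsWithin measurableSet_Icc t) (hm t ht)
  exact hF.div hD hDt

theorem mul_sub_mul_nonneg_of_bounds {M D F D' c₁ c₂ c₄ : ℝ} (hc₂ : 0 ≤ c₂)
    (hM : c₂ ≤ M) (hD : c₁ ≤ D) (hc₁ : 0 ≤ c₁) (hF : 0 ≤ F) (hD' : |D'| ≤ c₄)
    (hsmall : F * c₄ ≤ c₁ * c₂) :
    0 ≤ M * D - F * D' := by
  have hFD' : F * D' ≤ F * c₄ := mul_le_mul_of_nonneg_left ((le_abs_self _).trans hD') hF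
  nlinarith

theorem derivWithin_integral_div_nonneg {m D D' : ℝ → ℝ} {T t c₁ c₂ c₃ c₄ : ℝ}
    (hc₁ : 0 < c₁) (hc₂ : 0 ≤ c₂) (hT : 0 < T) (hm : ContinuousOn m (Icc 0 T))
    (hmb : ∀ s ∈ Icc 0 T, m s ∈ Icc c₂ c₃)
    (hD : ∀ s ∈ Icc 0 T, HasDerivWithinAt D (D' s) (Icc 0 T) s)
    (hDlb : ∀ s ∈ Icc 0 T, c₁ ≤ D s) (hD'b : ∀ s ∈ Icc 0 T, |D' s| ≤ c₄)
    (ht : t ∈ Icc 0 T) (hsmall : t * (c₃ * c₄) ≤ c₁ * c₂) :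
    0 ≤ derivWithin (fun u => (∫ x in 0..u, m x) / D u) (Icc 0 T) t := by
  have hDt : 0 < D t := hc₁.trans_le (hDlb t ht)
  rw [(hasDerivWithinAt_integral_div hm ht (hD t ht) hDt.ne').derivWithin
    (uniqueDiffOn_Icc hT t ht)]
  refine div_nonneg ?_ (by positivity)
  obtain ⟨hFlb, hFub⟩ := integral_mem_Icc_mul_of_mem_Icc ht.1
    ((hm.mono (Icc_subset_Icc le_rfl ht.2)).intervalIntegrable_of_Icc ht.1)
    fun s hs => hmb s ⟨hs.1, hs.2.trans ht.2⟩
  have hc₄ : 0 ≤ c₄ := (abs_nonneg _).trans (hD'b t ht)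
  refine mul_sub_mul_nonneg_of_bounds hc₂ (hmb t ht).1 (hDlb t ht) hc₁.le
    ((mul_nonneg hc₂ ht.1).trans hFlb) (hD'b t ht) ?_
  calc (∫ x in 0..t, m x) * c₄ ≤ c₃ * t * c₄ := mul_le_mul_of_nonneg_right hFub hc₄
    _ = t * (c₃ * c₄) := by ring
    _ ≤ c₁ * c₂ := hsmall

theorem stmt_7 (T c₁ c₂ c₃ c₄ : ℝ) (hT : 0 < T)
    (hc₁ : 0 < c₁) (hc₂ : 0 < c₂) (hc₃ : 0 < c₃) (hc₄ : 0 < c₄)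
    (m D D' : ℝ → ℝ)
    (hm : ContinuousOn m (Set.Icc 0 T))
    (hmlb : ∀ t ∈ Set.Icc (0:ℝ) T, c₂ ≤ m t)
    (hmub : ∀ t ∈ Set.Icc (0:ℝ) T, m t ≤ c₃)
    (hD : ∀ t ∈ Set.Icc (0:ℝ) T, HasDerivWithinAt D (D' t) (Set.Icc 0 T) t)
    (hDlb : ∀ t ∈ Set.Icc (0:ℝ) T, c₁ ≤ D t)
    (hD'b : ∀ t ∈ Set.Icc (0:ℝ) T, |D' t| ≤ c₄)
    (lam : ℝ → ℝ) (hlam : ∀ t, lam t = (∫ s in (0:ℝ)..t, m s) / D t) :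
    (∀ t ∈ Set.Icc (0:ℝ) (min T (c₁ * c₂ / (c₃ * c₄))),
      0 ≤ derivWithin lam (Set.Icc 0 T) t) ∧
    ∃ Tbar > (0:ℝ), ∀ t ∈ Set.Icc (0:ℝ) Tbar,
      0 ≤ derivWithin lam (Set.Icc 0 T) t := by
  obtain rfl : lam = fun t => (∫ s in (0:ℝ)..t, m s) / D t := funext hlam
  have key : ∀ t ∈ Icc (0:ℝ) (min T (c₁ * c₂ / (c₃ * c₄))),
      0 ≤ derivWithin (fun t => (∫ s in (0:ℝ)..t, m s) / D t) (Icc 0 T) t := by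
    rintro t ⟨ht0, ht⟩
    rw [le_min_iff, le_div_iff₀ (by positivity)] at ht
    exact derivWithin_integral_div_nonneg hc₁ hc₂.le hT hm
      (fun s hs => ⟨hmlb s hs, hmub s hs⟩) hD hDlb hD'b ⟨ht0, ht.1⟩ ht.2
  exact ⟨key, _, lt_min hT (by positivity), key⟩
end

section
/- Let σ ≠ 0, L > 0, N ∈ ℕ, and real coefficients a₀,…,a_N and f₀,…,f_N. Define c₀(t) := a₀ + f₀·t/|σ| and, for 1 ≤ k ≤ N, c_k(t) := ( a_k + f_k·L²/(k²π²) )·exp( k²π²·t/(L²|σ|) ) − f_k·L²/(k²π²). Define v(x,t) := Σ_{k=0}^{N} c_k(t)·cos(kπx/L). Then for all (x,t) ∈ ℝ²: |σ|·∂ₜv(x,t) + ∂²ₓv(x,t) = Σ_{k=0}^{N} f_k·cos(kπx/L); moreover v(x,0) = Σ_{k=0}^{N} a_k·cos(kπx/L) for all x, and ∂ₓv(0,t) = ∂ₓv(L,t) = 0 for all t. -/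
/-!
Each mode `cos (kπx/L)` is an eigenfunction of `∂ₓ²` with eigenvalue `-(kπ/L)²` and has
`∂ₓ = 0` at `x = 0` and `x = L`, so the equation splits into the scalar linear ODEs
`|σ| c_k' = f_k + (kπ/L)² c_k`, of which the given `c_k` are the solutions with `c_k(0) = a_k`.
-/

open Real Finset

noncomputable def cosSum (L : ℝ) (N : ℕ) (b : ℕ → ℝ) (x : ℝ) : ℝ :=
  ∑ k ∈ range (N + 1), b k * cos (k * π * x / L)

noncomputable def sinSum (L : ℝ) (N : ℕ) (b : ℕ → ℝ) (x : ℝ) : ℝ :=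
  ∑ k ∈ range (N + 1), b k * sin (k * π * x / L)

theorem hasDerivAt_cos_mul_div (α L x : ℝ) :
    HasDerivAt (fun y => cos (α * y / L)) (-(α / L) * sin (α * x / L)) x := by
  convert (((hasDerivAt_id' x).const_mul α).div_const L).cos using 1
  ring

theorem hasDerivAt_sin_mul_div (α L x : ℝ) :
    HasDerivAt (fun y => sin (α * y / L)) (α / L * cos (α * x / L)) x := by
  convert (((hasDerivAt_id' x).const_mul α).div_const L).sin using 1
  ring

section TrigSums

variable (L : ℝ) (N : ℕ) (b : ℕ → ℝ)

theorem hasDerivAt_cosSum (x : ℝ) :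
    HasDerivAt (cosSum L N b) (sinSum L N (fun k => -(k * π / L) * b k) x) x := by
  refine (HasDerivAt.fun_sum (u := range (N + 1)) fun k _ =>
    (hasDerivAt_cos_mul_div (k * π) L x).const_mul (b k)).congr_deriv ?_
  exact sum_congr rfl fun k _ => by ring

theorem hasDerivAt_sinSum (x : ℝ) :
    HasDerivAt (sinSum L N b) (cosSum L N (fun k => k * π / L * b k) x) x := by
  refine (HasDerivAt.fun_sum (u := range (N + 1)) fun k _ =>
    (hasDerivAt_sin_mul_div (k * π) L x).const_mul (b k)).congr_deriv ?_
  exact sum_congr rfl fun k _ => by ring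

theorem deriv_cosSum : deriv (cosSum L N b) = sinSum L N (fun k => -(k * π / L) * b k) :=
  funext fun x => (hasDerivAt_cosSum L N b x).deriv

theorem deriv_deriv_cosSum (x : ℝ) :
    deriv (deriv (cosSum L N b)) x = cosSum L N (fun k => -(k * π / L) ^ 2 * b k) x := by
  rw [deriv_cosSum, (hasDerivAt_sinSum L N _ x).deriv]
  exact sum_congr rfl fun k _ => by ring

theorem sinSum_zero : sinSum L N b 0 = 0 :=
  sum_eq_zero fun k _ => by simp

theorem sinSum_self (hL : L ≠ 0) : sinSum L N b L = 0 :=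
  sum_eq_zero fun k _ => by simp [mul_div_assoc, div_self hL, sin_nat_mul_pi]

theorem hasDerivAt_cosSum_coeff {c : ℕ → ℝ → ℝ} {c' : ℕ → ℝ} {t : ℝ}
    (hc : ∀ k ∈ range (N + 1), HasDerivAt (c k) (c' k) t) (x : ℝ) :
    HasDerivAt (fun t => cosSum L N (fun k => c k t) x) (cosSum L N c' x) t :=
  HasDerivAt.fun_sum fun k hk => (hc k hk).mul_const _

end TrigSums

/-- The solution of `s y' = b + (p / q) y` with `y(0) = a`. -/
theorem hasDerivAt_linear_ode_solution {p q : ℝ} (hp : p ≠ 0) (hq : q ≠ 0) (a b s t : ℝ) :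
    HasDerivAt (fun t => (a + b * q / p) * exp (p * t / (q * s)) - b * q / p)
      ((b + p / q * ((a + b * q / p) * exp (p * t / (q * s)) - b * q / p)) / s) t := by
  have hexp : HasDerivAt (fun t => exp (p * t / (q * s)))
      (exp (p * t / (q * s)) * (p / (q * s))) t := by
    simpa using (((hasDerivAt_id t).const_mul p).div_const (q * s)).exp
  refine ((hexp.const_mul (a + b * q / p)).sub_const (b * q / p)).congr_deriv ?_
  have hb : p / q * (b * q / p) = b := by field_simp
  rw [mul_sub, hb]
  ring

theorem hasDerivAt_mode_coeff {σ L : ℝ} (hL : L ≠ 0) {N : ℕ} {a f : ℕ → ℝ} {c : ℕ → ℝ → ℝ}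
    (hc0 : ∀ t, c 0 t = a 0 + f 0 * t / |σ|)
    (hck : ∀ k, 1 ≤ k → k ≤ N → ∀ t, c k t =
      (a k + f k * L ^ 2 / ((k : ℝ) ^ 2 * π ^ 2)) *
          exp ((k : ℝ) ^ 2 * π ^ 2 * t / (L ^ 2 * |σ|)) -
        f k * L ^ 2 / ((k : ℝ) ^ 2 * π ^ 2))
    {k : ℕ} (hk : k ≤ N) (t : ℝ) :
    HasDerivAt (c k) ((f k + (k * π / L) ^ 2 * c k t) / |σ|) t := by
  rcases Nat.eq_zero_or_pos k with rfl | hk1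
  · rw [funext hc0]
    simpa using ((hasDerivAt_id t).const_mul (f 0)).div_const |σ| |>.const_add (a 0)
  · rw [funext (hck k hk1 hk), div_pow, mul_pow]
    exact hasDerivAt_linear_ode_solution (by positivity) (by positivity) _ _ _ t

theorem stmt_11 (σ L : ℝ) (hσ : σ ≠ 0) (hL : 0 < L) (N : ℕ) (a f : ℕ → ℝ)
    (c : ℕ → ℝ → ℝ)
    (hc0 : ∀ t, c 0 t = a 0 + f 0 * t / |σ|)
    (hck : ∀ k, 1 ≤ k → k ≤ N → ∀ t, c k t =
      (a k + f k * L ^ 2 / ((k : ℝ) ^ 2 * Real.pi ^ 2)) *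
          Real.exp ((k : ℝ) ^ 2 * Real.pi ^ 2 * t / (L ^ 2 * |σ|)) -
        f k * L ^ 2 / ((k : ℝ) ^ 2 * Real.pi ^ 2))
    (v : ℝ × ℝ → ℝ)
    (hv : ∀ q : ℝ × ℝ, v q =
      ∑ k ∈ Finset.range (N + 1), c k q.2 * Real.cos ((k : ℝ) * Real.pi * q.1 / L)) :
    (∀ q : ℝ × ℝ, |σ| * pderivT v q + pderivXX v q =
      ∑ k ∈ Finset.range (N + 1), f k * Real.cos ((k : ℝ) * Real.pi * q.1 / L)) ∧
    (∀ x : ℝ, v (x, 0) =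
      ∑ k ∈ Finset.range (N + 1), a k * Real.cos ((k : ℝ) * Real.pi * x / L)) ∧
    (∀ t : ℝ, pderivX v (0, t) = 0 ∧ pderivX v (L, t) = 0) := by
  obtain rfl : v = fun q => cosSum L N (fun k => c k q.2) q.1 := funext hv
  refine ⟨fun ⟨x, t⟩ => ?_, fun x => sum_congr rfl fun k hk => ?_, fun t => ⟨?_, ?_⟩⟩
  · have hT := hasDerivAt_cosSum_coeff L N
      (fun k hk => hasDerivAt_mode_coeff hL.ne' hc0 hck (mem_range_succ_iff.mp hk) t) x
    change |σ| * deriv (fun t => cosSum L N (fun k => c k t) x) t +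
      deriv (deriv (cosSum L N fun k => c k t)) x = cosSum L N f x
    rw [hT.deriv, deriv_deriv_cosSum, cosSum, cosSum, cosSum, mul_sum,
      ← sum_add_distrib]
    have hσ' : |σ| ≠ 0 := abs_ne_zero.mpr hσ
    refine sum_congr rfl fun k _ => ?_
    field_simp
    ring
  · rcases Nat.eq_zero_or_pos k with rfl | hk1
    · simp [hc0]
    · simp [hck k hk1 (mem_range_succ_iff.mp hk)]
  · change deriv (cosSum L N fun k => c k t) 0 = 0
    rw [deriv_cosSum, sinSum_zero]
  · change deriv (cosSum L N fun k => c k t) L = 0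
    rw [deriv_cosSum, sinSum_self L N _ hL.ne']
end
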